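/- On V ⊗ V, the exchange operator P − Q can be written in terms of the osp(m|n) generators: P − Q = −(1/2) Σ_{a,b=1}^{m+n} ξ_a ξ_b (−1)^{[a][b]} σ^{ab} ⊗ σ^{āb̄}, where the tensor product of operators acts with the graded sign rule. -/
import Mathlib


open Matrix BigOperators

namespace OSP

variable (m n : ℕ)

/-- Z₂ grading (0-based index): [a] = 0 for the first m indices, 1 otherwise. -/
def gr (a : Fin (m + n)) : ℕ := if (a : ℕ) < m then 0 else 1

/-- Sign ξ_a : +1 on the first m + n/2 indices, −1 otherwise. -/
def xi (a : Fin (m + n)) : ℚ := if (a : ℕ) < m + n / 2 then 1 else -1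

/-- Conjugate index ā. -/
def conj (a : Fin (m + n)) : Fin (m + n) :=
  if h : (a : ℕ) < m then ⟨m - 1 - (a : ℕ), by omega⟩
  else ⟨2 * m + n - 1 - (a : ℕ), by have := a.isLt; omega⟩

/-- Metric g_{ab} = ξ_a δ_{a,b̄}. -/
def gmet (a b : Fin (m + n)) : ℚ := xi m n a * (if a = conj m n b then 1 else 0)

/-- Matrix unit e^{ab}. -/
def E (a b : Fin (m + n)) : Matrix (Fin (m + n)) (Fin (m + n)) ℚ :=
  fun p q => if p = a ∧ q = b then 1 else 0

/-- osp(m|n) generators σ^{ab} = Σ_k g_{ak} e^{kb} − (−1)^{[a][b]} Σ_k g_{bk} e^{ka}. -/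
def sg (a b : Fin (m + n)) : Matrix (Fin (m + n)) (Fin (m + n)) ℚ :=
  (∑ k, gmet m n a k • E m n k b)
    - ((-1 : ℚ) ^ (gr m n a * gr m n b)) • ∑ k, gmet m n b k • E m n k a

/-- Graded tensor product of operators on V ⊗ V: here d = degree of the second factor,
`(x ⊗ y)(v^r ⊗ v^s) = (−1)^{d·[r]} x v^r ⊗ y v^s`, written as a matrix on the product basis. -/
def gt (d : ℕ) (x y : Matrix (Fin (m + n)) (Fin (m + n)) ℚ) :
    Matrix (Fin (m + n) × Fin (m + n)) (Fin (m + n) × Fin (m + n)) ℚ :=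
  fun pq rs => ((-1 : ℚ) ^ (d * gr m n rs.1)) * x pq.1 rs.1 * y pq.2 rs.2

/-- σ^{ab} acting in the first tensor slot. -/
def sg1 (a b : Fin (m + n)) : Matrix (Fin (m + n) × Fin (m + n)) (Fin (m + n) × Fin (m + n)) ℚ :=
  gt m n 0 (sg m n a b) 1

/-- σ^{ab} acting in the second tensor slot (with Koszul sign, deg σ^{ab} = [a]+[b]). -/
def sg2 (a b : Fin (m + n)) : Matrix (Fin (m + n) × Fin (m + n)) (Fin (m + n) × Fin (m + n)) ℚ :=
  gt m n (gr m n a + gr m n b) 1 (sg m n a b)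

/-- Graded permutation: P(v^a ⊗ v^b) = (−1)^{[a][b]} v^b ⊗ v^a, as a matrix. -/
def Pop : Matrix (Fin (m + n) × Fin (m + n)) (Fin (m + n) × Fin (m + n)) ℚ :=
  fun pq ab => ((-1 : ℚ) ^ (gr m n ab.1 * gr m n ab.2)) *
    (if pq.1 = ab.2 ∧ pq.2 = ab.1 then 1 else 0)

/-- Q(v^a ⊗ v^b) = δ_{a,b̄} ξ_{ā} Σ_c ξ_c v^c ⊗ v^{c̄}, as a matrix. -/
def Qop : Matrix (Fin (m + n) × Fin (m + n)) (Fin (m + n) × Fin (m + n)) ℚ :=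
  fun pq ab => (if ab.1 = conj m n ab.2 then (1 : ℚ) else 0) * xi m n (conj m n ab.1) *
    (if pq.2 = conj m n pq.1 then xi m n pq.1 else 0)

/-- (σ₁σ₂)^{ab} = Σ_c ξ_c σ₁^{ac} σ₂^{c̄b}. -/
def S12 (a b : Fin (m + n)) : Matrix (Fin (m + n) × Fin (m + n)) (Fin (m + n) × Fin (m + n)) ℚ :=
  ∑ c, xi m n c • (sg1 m n a c * sg2 m n (conj m n c) b)

lemma conj_val (a : Fin (m + n)) : (conj m n a : ℕ) =
    if (a : ℕ) < m then m - 1 - (a : ℕ) else 2 * m + n - 1 - (a : ℕ) := by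
  unfold conj; split_ifs <;> rfl

lemma conj_conj (a : Fin (m + n)) : conj m n (conj m n a) = a := by
  have ha := a.isLt
  rw [Fin.ext_iff, conj_val, conj_val]
  split_ifs <;> omega

lemma gr_conj (a : Fin (m + n)) : gr m n (conj m n a) = gr m n a := by
  have ha := a.isLt
  unfold gr
  rw [conj_val]
  split_ifs <;> simp_all <;> omega

lemma xi_conj (hn : Even n) (a : Fin (m + n)) :
    xi m n (conj m n a) = (-1 : ℚ) ^ (gr m n a) * xi m n a := by
  obtain ⟨k, hk⟩ := hn
  have ha := a.isLt
  have h2 : n / 2 = k := by omega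
  unfold gr xi
  rw [conj_val]
  split_ifs <;> simp_all <;> omega

lemma xi_sq (a : Fin (m + n)) : xi m n a * xi m n a = 1 := by
  unfold xi; split_ifs <;> norm_num

lemma xi_cases (a : Fin (m + n)) : xi m n a = 1 ∨ xi m n a = -1 := by
  unfold xi; split_ifs <;> simp

lemma gr_cases (a : Fin (m + n)) : gr m n a = 0 ∨ gr m n a = 1 := by
  unfold gr; split_ifs <;> simp

lemma conj_eq_iff (a b : Fin (m + n)) : a = conj m n b ↔ b = conj m n a := by
  constructor <;> intro h <;> subst h <;> rw [conj_conj]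

lemma conj_inj_iff (a b : Fin (m + n)) : conj m n a = conj m n b ↔ a = b := by
  constructor
  · intro h; have := congrArg (conj m n) h; simpa [conj_conj] using this
  · rintro rfl; rfl

lemma conj_eq_comm (a b : Fin (m + n)) : conj m n a = b ↔ a = conj m n b := by
  rw [← conj_inj_iff m n a (conj m n b), conj_conj]

lemma sg_apply (a b p q : Fin (m + n)) :
    sg m n a b p q
      = (if a = conj m n p ∧ b = q then xi m n a else 0)
        - (-1 : ℚ) ^ (gr m n a * gr m n b)
            * (if b = conj m n p ∧ a = q then xi m n b else 0) := by
  have key : ∀ x c : Fin (m + n),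
      (∑ k, gmet m n x k * E m n k c p q)
        = (if x = conj m n p ∧ c = q then xi m n x else 0) := by
    intro x c
    rw [Finset.sum_eq_single p]
    · simp only [gmet, E, Matrix.smul_apply, smul_eq_mul]
      split_ifs <;> simp_all
    · intro k _ hk
      simp only [gmet, E, Matrix.smul_apply, smul_eq_mul]
      split_ifs with h1 h2 <;> simp_all [eq_comm]
    · simp
  simp only [sg, Matrix.sub_apply, Matrix.smul_apply, Matrix.sum_apply, smul_eq_mul]
  rw [key, key]

lemma collapse {N : ℕ} (A B : Fin N) (P : Fin N → Fin N → Prop)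
    [∀ a b, Decidable (P a b)] (v : Fin N → Fin N → ℚ) :
    ∑ a : Fin N, ∑ b : Fin N, (if a = A ∧ b = B ∧ P a b then v a b else 0)
      = if P A B then v A B else 0 := by
  simp [ite_and, Finset.sum_ite_eq']

lemma pointwise (hn : Even n) (p q r s a b : Fin (m + n)) :
    xi m n a * xi m n b * (-1 : ℚ) ^ (gr m n a * gr m n b) *
        ((-1 : ℚ) ^ ((gr m n a + gr m n b) * gr m n r) * sg m n a b p r *
          sg m n (conj m n a) (conj m n b) q s)
      = (if a = q ∧ b = r ∧ (a = conj m n p ∧ b = conj m n s) then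
          xi m n a * xi m n b * (-1 : ℚ) ^ (gr m n a * gr m n b) *
            ((-1 : ℚ) ^ ((gr m n a + gr m n b) * gr m n r) * xi m n a * xi m n (conj m n a)) else 0)
        - (if a = conj m n p ∧ b = r ∧ (b = q ∧ a = conj m n s) then
          xi m n a * xi m n b * (-1 : ℚ) ^ (gr m n a * gr m n b) *
            ((-1 : ℚ) ^ ((gr m n a + gr m n b) * gr m n r) * (-1 : ℚ) ^ (gr m n a * gr m n b) *
              xi m n a * xi m n (conj m n b)) else 0)
        - (if a = r ∧ b = conj m n p ∧ (a = q ∧ b = conj m n s) then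
          xi m n a * xi m n b * (-1 : ℚ) ^ (gr m n a * gr m n b) *
            ((-1 : ℚ) ^ ((gr m n a + gr m n b) * gr m n r) * (-1 : ℚ) ^ (gr m n a * gr m n b) *
              xi m n b * xi m n (conj m n a)) else 0)
        + (if a = r ∧ b = q ∧ (b = conj m n p ∧ a = conj m n s) then
          xi m n a * xi m n b * (-1 : ℚ) ^ (gr m n a * gr m n b) *
            ((-1 : ℚ) ^ ((gr m n a + gr m n b) * gr m n r) * (-1 : ℚ) ^ (gr m n a * gr m n b) *
              (-1 : ℚ) ^ (gr m n a * gr m n b) * xi m n b * xi m n (conj m n b)) else 0) := by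
  rw [sg_apply, sg_apply]
  simp only [conj_inj_iff, conj_eq_comm, gr_conj, conj_conj]
  by_cases h1 : a = conj m n p <;> by_cases h2 : b = r <;>
    by_cases h4 : a = r <;> by_cases h3 : b = conj m n p <;>
    by_cases h5 : a = q <;> by_cases h6 : b = conj m n s <;>
    by_cases h7 : b = q <;> by_cases h8 : a = conj m n s <;>
    simp_all <;> try ring
  all_goals tauto



set_option maxHeartbeats 1600000 in
/-- P − Q = −(1/2) Σ_{a,b} ξ_a ξ_b (−1)^{[a][b]} σ^{ab} ⊗ σ^{āb̄}
(graded tensor, deg σ^{āb̄} = [a]+[b]). -/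
theorem exchange_in_terms_of_sg (m n : ℕ) (hn : Even n) :
    Pop m n - Qop m n
      = (-(1 / 2 : ℚ)) • ∑ a : Fin (m + n), ∑ b : Fin (m + n),
          (xi m n a * xi m n b * (-1 : ℚ) ^ (gr m n a * gr m n b)) •
            gt m n (gr m n a + gr m n b) (sg m n a b) (sg m n (conj m n a) (conj m n b)) := by
  ext ⟨p, q⟩ ⟨r, s⟩
  simp only [Matrix.sub_apply, Matrix.smul_apply, Matrix.sum_apply, smul_eq_mul, Pop, Qop, gt]
  rw [Finset.sum_congr rfl (fun a _ => Finset.sum_congr rfl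
    (fun b _ => pointwise m n hn p q r s a b))]
  simp only [Finset.sum_sub_distrib, Finset.sum_add_distrib, collapse, conj_inj_iff]
  by_cases hA : q = conj m n p <;> by_cases hD : p = s <;> by_cases hC : r = q <;>
      by_cases hB : r = conj m n s <;>
    simp_all [xi_conj m n hn, gr_conj, conj_conj, conj_inj_iff, conj_eq_comm]
  all_goals try (intro h; exact hC h.symm)
  all_goals try (intro h; exact hB ((conj_eq_iff m n s r).mp h))
  all_goals (rcases gr_cases m n p with hp | hp <;> rcases gr_cases m n q with hq | hq <;>
    rcases gr_cases m n r with hr | hr <;> rcases gr_cases m n s with hs | hs <;>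
    rcases xi_cases m n p with xp | xp <;> rcases xi_cases m n q with xq | xq <;>
    rcases xi_cases m n r with xr | xr <;> rcases xi_cases m n s with xs | xs <;>
    simp only [hp, hq, hr, hs, xp, xq, xr, xs, gr_conj, conj_conj, xi_conj m n hn] <;>
    norm_num)
end OSP
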